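/- arXiv:1705.05518 — 2 statements merged into one kernel-verified Lean document; each statement's English description precedes it below -/
import Mathlib

section
/- Define v̄(x', x_d) = (x_d - h(x'))/(ε + h₁(x') - h(x')) on the narrow region Ω_{2R} = { h(x') < x_d < ε + h₁(x'), |x'| < 2R }, where h₁, h satisfy h₁(0') = h(0') = 0, ∇h₁(0') = ∇h(0') = 0, C² norms bounded, and ε + h₁ - h ≥ (1/C)(ε + |x'|²). Then for k = 1, …, d-1: |∂_{x_k} v̄(x)| ≤ C|x'|/(ε + |x'|²) and 1/(C(ε + |x'|²)) ≤ |∂_{x_d} v̄(x)| ≤ C/(ε + |x'|²) for all x ∈ Ω_{2R}. -/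
/-!
Write `D = ε + h₁ - h` for the height of the narrow region, so that `v̄ = (x_d - h) / D`,
`∂_d v̄ = 1 / D` and `∂_k v̄ = -∂_k h / D - v̄ ∂_k (h₁ - h) / D` with `0 ≤ v̄ ≤ 1`.
Since `h₁` and `h` vanish to second order at `0'`, the mean value inequality gives
`|∇h|, |∇h₁| ≤ κ₂ |x'|` and `|h|, |h₁| ≤ κ₂ |x'|²`; hence `D ≤ (1 + 2κ₂)(ε + |x'|²)`, while
`ε + |x'|² ≤ C₀ D` is assumed. All bounds follow with `C = 3 (1 + κ₂)(1 + C₀)`.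
-/

open Metric ContinuousLinearMap

variable {E F : Type*} [NormedAddCommGroup E] [NormedSpace ℝ E]
  [NormedAddCommGroup F] [NormedSpace ℝ F]

theorem norm_fderiv_le_of_norm_iteratedFDeriv_two_le {f : E → F} {r κ : ℝ}
    (hf : ContDiff ℝ 2 f) (hdf0 : fderiv ℝ f 0 = 0)
    (hb : ∀ y : E, ‖y‖ < r → ‖iteratedFDeriv ℝ 2 f y‖ ≤ κ) {x : E} (hx : ‖x‖ < r) :
    ‖fderiv ℝ f x‖ ≤ κ * ‖x‖ := by
  have hdf' : Differentiable ℝ (fderiv ℝ f) :=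
    (hf.fderiv_right (m := 1) le_rfl).differentiable one_ne_zero
  have hb' : ∀ y ∈ ball (0 : E) r, ‖fderiv ℝ (fderiv ℝ f) y‖ ≤ κ := fun y hy => by
    simpa [← norm_iteratedFDeriv_fderiv (n := 1), ← norm_iteratedFDeriv_fderiv (n := 0)]
      using hb y (mem_ball_zero_iff.mp hy)
  have hxr : x ∈ ball (0 : E) r := mem_ball_zero_iff.mpr hx
  simpa [hdf0] using (convex_ball (0 : E) r).norm_image_sub_le_of_norm_fderiv_le
    (fun y _ => hdf' y) hb' hxr (mem_ball_self (pos_of_mem_ball hxr))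

theorem norm_le_of_norm_iteratedFDeriv_two_le {f : E → F} {r κ : ℝ}
    (hf : ContDiff ℝ 2 f) (hf0 : f 0 = 0) (hdf0 : fderiv ℝ f 0 = 0)
    (hb : ∀ y : E, ‖y‖ < r → ‖iteratedFDeriv ℝ 2 f y‖ ≤ κ) {x : E} (hx : ‖x‖ < r) :
    ‖f x‖ ≤ κ * ‖x‖ ^ 2 := by
  have hκ : 0 ≤ κ := (norm_nonneg _).trans (hb 0 (by simpa using (norm_nonneg x).trans_lt hx))
  have hgrad : ∀ y ∈ closedBall (0 : E) ‖x‖, ‖fderiv ℝ f y‖ ≤ κ * ‖x‖ := fun y hy => by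
    rw [mem_closedBall_zero_iff] at hy
    exact (norm_fderiv_le_of_norm_iteratedFDeriv_two_le hf hdf0 hb (hy.trans_lt hx)).trans
      (mul_le_mul_of_nonneg_left hy hκ)
  have := (convex_closedBall (0 : E) ‖x‖).norm_image_sub_le_of_norm_fderiv_le
    (fun y _ => (hf.differentiable two_ne_zero) y) hgrad
    (mem_closedBall_zero_iff.mpr le_rfl) (mem_closedBall_self (norm_nonneg x))
  simpa [hf0, sq, mul_assoc] using this

theorem abs_fderiv_apply_single_le {ι : Type*} [Fintype ι] [DecidableEq ι]
    {f : EuclideanSpace ℝ ι → ℝ} {r κ : ℝ} (hf : ContDiff ℝ 2 f) (hdf0 : fderiv ℝ f 0 = 0)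
    (hb : ∀ y : EuclideanSpace ℝ ι, ‖y‖ < r → ‖iteratedFDeriv ℝ 2 f y‖ ≤ κ)
    {x : EuclideanSpace ℝ ι} (hx : ‖x‖ < r) (k : ι) :
    |fderiv ℝ f x (EuclideanSpace.single k 1)| ≤ κ * ‖x‖ := by
  simpa using (fderiv ℝ f x).le_of_opNorm_le
    (norm_fderiv_le_of_norm_iteratedFDeriv_two_le hf hdf0 hb hx) (EuclideanSpace.single k 1)

theorem fderiv_sub_div_apply {h g : E → ℝ} {A G : E →L[ℝ] ℝ} {x : E}
    (hh : HasFDerivAt h A x) (hg : HasFDerivAt g G x) (hgx : g x ≠ 0) (t : ℝ) (v : E) (s : ℝ) :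
    fderiv ℝ (fun p : E × ℝ => (p.2 - h p.1) / g p.1) (x, t) (v, s) =
      (s - A v) / g x - (t - h x) * G v / g x ^ 2 := by
  have hnum : HasFDerivAt (fun p : E × ℝ => p.2 - h p.1) (snd ℝ E ℝ - A.comp (fst ℝ E ℝ)) (x, t) :=
    hasFDerivAt_snd.sub (hh.comp (x, t) hasFDerivAt_fst)
  have hinv : HasFDerivAt (fun p : E × ℝ => (g p.1)⁻¹)
      ((toSpanSingleton ℝ (-(g x ^ 2)⁻¹)).comp (G.comp (fst ℝ E ℝ))) (x, t) :=
    (hasFDerivAt_inv hgx).comp (x, t) (hg.comp (x, t) hasFDerivAt_fst)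
  simp only [div_eq_mul_inv]
  rw [(hnum.fun_mul hinv).fderiv]
  simp only [add_apply, smul_apply, comp_apply, coe_fst', toSpanSingleton_apply, smul_eq_mul,
    mul_neg, sub_apply, coe_snd']
  field_simp
  ring

theorem abs_neg_div_sub_mul_div_sq_le {a b N D M : ℝ} (hD : 0 < D) (hN : 0 ≤ N) (hND : N ≤ D)
    (ha : |a| ≤ M) (hb : |b| ≤ M) : |-a / D - N * (b - a) / D ^ 2| ≤ 3 * M / D := by
  have hND' : N / D ≤ 1 := (div_le_one hD).mpr hND
  have hba : |b - a| ≤ 2 * M := by linarith [abs_sub b a]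
  have hnum : |-a - N / D * (b - a)| ≤ 3 * M := calc
    |-a - N / D * (b - a)| ≤ |-a| + |N / D * (b - a)| := abs_sub _ _
    _ = |a| + N / D * |b - a| := by rw [abs_neg, abs_mul, abs_of_nonneg (div_nonneg hN hD.le)]
    _ ≤ M + 1 * (2 * M) := by gcongr
    _ = 3 * M := by ring
  calc |-a / D - N * (b - a) / D ^ 2| = |-a - N / D * (b - a)| / D := by
        rw [← abs_of_pos hD, ← abs_div, abs_of_pos hD]; congr 1; field_simp
    _ ≤ 3 * M / D := by gcongr

theorem stmt3_general (n : ℕ) (κ₂ R C₀ : ℝ) (hκ₂ : 0 < κ₂) (hC₀ : 0 < C₀) :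
    ∃ C > (0:ℝ), ∀ ε : ℝ, 0 < ε → ε < 1/2 →
      ∀ h₁ h : EuclideanSpace ℝ (Fin n) → ℝ,
        ContDiff ℝ 2 h₁ → ContDiff ℝ 2 h →
        h₁ 0 = 0 → h 0 = 0 → fderiv ℝ h₁ 0 = 0 → fderiv ℝ h 0 = 0 →
        (∀ i : ℕ, i ≤ 2 → ∀ x : EuclideanSpace ℝ (Fin n), ‖x‖ < 2 * R →
          ‖iteratedFDeriv ℝ i h₁ x‖ ≤ κ₂ ∧ ‖iteratedFDeriv ℝ i h x‖ ≤ κ₂) →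
        (∀ x : EuclideanSpace ℝ (Fin n), ‖x‖ < 2 * R →
          (1/C₀) * (ε + ‖x‖ ^ 2) ≤ ε + h₁ x - h x) →
        ∀ (x' : EuclideanSpace ℝ (Fin n)) (t : ℝ),
          ‖x'‖ < 2 * R → h x' < t → t < ε + h₁ x' →
          (∀ k : Fin n,
            |fderiv ℝ (fun p : EuclideanSpace ℝ (Fin n) × ℝ =>
                (p.2 - h p.1) / (ε + h₁ p.1 - h p.1)) (x', t)
                (EuclideanSpace.single k 1, 0)|
              ≤ C * ‖x'‖ / (ε + ‖x'‖ ^ 2)) ∧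
          1 / (C * (ε + ‖x'‖ ^ 2))
            ≤ |fderiv ℝ (fun p : EuclideanSpace ℝ (Fin n) × ℝ =>
                (p.2 - h p.1) / (ε + h₁ p.1 - h p.1)) (x', t) (0, 1)| ∧
          |fderiv ℝ (fun p : EuclideanSpace ℝ (Fin n) × ℝ =>
              (p.2 - h p.1) / (ε + h₁ p.1 - h p.1)) (x', t) (0, 1)|
            ≤ C / (ε + ‖x'‖ ^ 2) := by
  refine ⟨3 * (1 + κ₂) * (1 + C₀), by positivity, ?_⟩
  intro ε hε _ h₁ h hh₁ hh hh₁0 hh0 hdh₁0 hdh0 hbnd hgap x' t hx' hht hth₁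
  have hb₁ := fun y hy => (hbnd 2 le_rfl y hy).1
  have hb := fun y hy => (hbnd 2 le_rfl y hy).2
  set S := ε + ‖x'‖ ^ 2
  set D := ε + h₁ x' - h x'
  have hS : 0 < S := by positivity
  have hSD : S ≤ C₀ * D := by
    have := mul_le_mul_of_nonneg_left (hgap x' hx') hC₀.le
    rwa [← mul_assoc, mul_one_div_cancel hC₀.ne', one_mul] at this
  have hD : 0 < D := pos_of_mul_pos_right (hS.trans_le hSD) hC₀.le
  have hDS : D ≤ (1 + 2 * κ₂) * S := by
    have := abs_le.mp (norm_le_of_norm_iteratedFDeriv_two_le hh₁ hh₁0 hdh₁0 hb₁ hx')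
    have := abs_le.mp (norm_le_of_norm_iteratedFDeriv_two_le hh hh0 hdh0 hb hx')
    nlinarith
  have hA := (hh.differentiable two_ne_zero x').hasFDerivAt
  have hv := fderiv_sub_div_apply (g := fun y => ε + h₁ y - h y) hA
    (((hh₁.differentiable two_ne_zero x').hasFDerivAt.const_add ε).fun_sub hA) hD.ne' t
  have hnormal : fderiv ℝ (fun p : EuclideanSpace ℝ (Fin n) × ℝ =>
      (p.2 - h p.1) / (ε + h₁ p.1 - h p.1)) (x', t) (0, 1) = 1 / D := by
    rw [hv]; simp only [map_zero, sub_zero, mul_zero, zero_div]; rfl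
  refine ⟨fun k => ?_, ?_, ?_⟩
  · rw [hv, zero_sub, sub_apply]
    calc _ ≤ 3 * (κ₂ * ‖x'‖) / D := abs_neg_div_sub_mul_div_sq_le hD (by linarith) (by linarith)
          (abs_fderiv_apply_single_le hh hdh0 hb hx' k)
          (abs_fderiv_apply_single_le hh₁ hdh₁0 hb₁ hx' k)
      _ ≤ 3 * (1 + κ₂) * (1 + C₀) * ‖x'‖ / S := by
          rw [div_le_div_iff₀ hD hS]
          nlinarith [mul_le_mul_of_nonneg_left hSD (by positivity : 0 ≤ 3 * κ₂ * ‖x'‖),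
            mul_nonneg (norm_nonneg x') hD.le]
  · rw [hnormal, abs_of_pos (one_div_pos.mpr hD)]
    exact one_div_le_one_div_of_le hD (by nlinarith)
  · rw [hnormal, abs_of_pos (one_div_pos.mpr hD), div_le_div_iff₀ hD hS]
    nlinarith

/-- first-derivative bounds for the auxiliary function
v̄(x',x_d) = (x_d - h(x'))/(ε + h₁(x') - h(x')) in the narrow region. -/
theorem stmt3 (n : ℕ) (κ₂ R C₀ : ℝ) (hκ₂ : 0 < κ₂) (hR : 0 < R) (hC₀ : 0 < C₀) :
    ∃ C > (0:ℝ), ∀ ε : ℝ, 0 < ε → ε < 1/2 →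
      ∀ h₁ h : EuclideanSpace ℝ (Fin n) → ℝ,
        ContDiff ℝ 2 h₁ → ContDiff ℝ 2 h →
        h₁ 0 = 0 → h 0 = 0 → fderiv ℝ h₁ 0 = 0 → fderiv ℝ h 0 = 0 →
        (∀ i : ℕ, i ≤ 2 → ∀ x : EuclideanSpace ℝ (Fin n), ‖x‖ < 2 * R →
          ‖iteratedFDeriv ℝ i h₁ x‖ ≤ κ₂ ∧ ‖iteratedFDeriv ℝ i h x‖ ≤ κ₂) →
        (∀ x : EuclideanSpace ℝ (Fin n), ‖x‖ < 2 * R →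
          (1/C₀) * (ε + ‖x‖ ^ 2) ≤ ε + h₁ x - h x) →
        ∀ (x' : EuclideanSpace ℝ (Fin n)) (t : ℝ),
          ‖x'‖ < 2 * R → h x' < t → t < ε + h₁ x' →
          (∀ k : Fin n,
            |fderiv ℝ (fun p : EuclideanSpace ℝ (Fin n) × ℝ =>
                (p.2 - h p.1) / (ε + h₁ p.1 - h p.1)) (x', t)
                (EuclideanSpace.single k 1, 0)|
              ≤ C * ‖x'‖ / (ε + ‖x'‖ ^ 2)) ∧
          1 / (C * (ε + ‖x'‖ ^ 2))
            ≤ |fderiv ℝ (fun p : EuclideanSpace ℝ (Fin n) × ℝ =>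
                (p.2 - h p.1) / (ε + h₁ p.1 - h p.1)) (x', t) (0, 1)| ∧
          |fderiv ℝ (fun p : EuclideanSpace ℝ (Fin n) × ℝ =>
              (p.2 - h p.1) / (ε + h₁ p.1 - h p.1)) (x', t) (0, 1)|
            ≤ C / (ε + ‖x'‖ ^ 2) :=
  stmt3_general n κ₂ R C₀ hκ₂ hC₀
end

section
/- Let Ω = { h(x') < x_d < ε + h₁(x'), |x'| < R } be the narrow region with δ(x') := ε + h₁(x') − h(x') ≥ (1/C)(ε + |x'|²), and let v : Ω → ℝ be a W^{1,2} function with v(x', h(x')) = 0 and v(x', ε + h₁(x')) = 1 for each |x'| < R. Then for each fixed x', ∫_{h(x')}^{ε+h₁(x')} |∂_{x_d} v(x', x_d)|² dx_d ≥ 1/δ(x'), and consequently ∫_Ω |∂_{x_d} v|² dx ≥ (1/C) ∫_{|x'|<R} dx'/(ε + |x'|²) ≥ (1/C')/ρ_d(ε). -/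
/-!
On each vertical segment `v` rises from `0` to `1`, so Cauchy–Schwarz gives
`∫ |∂_d v|² ≥ 1 / δ(x')`. Integrating over `|x'| < R` (Fubini) with `δ ≤ C (ε + |x'|²)` bounds the
energy below by `C⁻¹ ∫_{|x'|<R} dx' / (ε + |x'|²)`, which polar coordinates turn into a multiple of
`∫₀^R r^(d-2) / (ε + r²) dr`. That integral is `arctan (R / √ε) / √ε` for `d = 2`,
`log (1 + R² / ε) / 2` for `d = 3`, and bounded below uniformly in `ε` for `d ≥ 4`.
-/

open MeasureTheory Set Metric

theorem sq_sub_div_le_integral_deriv_sq {g : ℝ → ℝ} (hg : ContDiff ℝ 1 g) {a b : ℝ} (hab : a < b) :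
    (g b - g a) ^ 2 / (b - a) ≤ ∫ t in a..b, deriv g t ^ 2 := by
  have hg' : Continuous (deriv g) := hg.continuous_deriv le_rfl
  have hFTC : ∫ t in a..b, deriv g t = g b - g a :=
    intervalIntegral.integral_deriv_eq_sub (fun x _ => hg.differentiable one_ne_zero x)
      (hg'.intervalIntegrable a b)
  set c := (g b - g a) / (b - a)
  -- Integrating `2 c g' - c² ≤ g'²` with `c` the mean slope is Cauchy–Schwarz on `[a, b]`.
  have hAMGM : ∫ t in a..b, (2 * c * deriv g t - c ^ 2) ≤ ∫ t in a..b, deriv g t ^ 2 :=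
    intervalIntegral.integral_mono_on hab.le
      ((continuous_const.mul hg' |>.sub continuous_const).intervalIntegrable a b)
      ((hg'.pow 2).intervalIntegrable a b) fun t _ => by nlinarith [sq_nonneg (deriv g t - c)]
  have hlin :
      ∫ t in a..b, (2 * c * deriv g t - c ^ 2) = 2 * c * (g b - g a) - (b - a) * c ^ 2 := by
    rw [intervalIntegral.integral_sub, intervalIntegral.integral_const_mul, hFTC,
      intervalIntegral.integral_const, smul_eq_mul]
    · exact (continuous_const.mul hg').intervalIntegrable a b
    · exact intervalIntegrable_const
  calc (g b - g a) ^ 2 / (b - a) = 2 * c * (g b - g a) - (b - a) * c ^ 2 := by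
        simp only [c]; field_simp [(sub_pos.2 hab).ne']; ring
    _ ≤ _ := hlin ▸ hAMGM

theorem integral_one_div_add_sq {ε : ℝ} (hε : 0 < ε) (R : ℝ) :
    ∫ r in (0:ℝ)..R, 1 / (ε + r ^ 2) = Real.arctan (R / √ε) / √ε := by
  have hs : 0 < √ε := Real.sqrt_pos.2 hε
  have h := intervalIntegral.integral_comp_div (fun x => 1 / (1 + x ^ 2)) hs.ne' (a := 0) (b := R)
  rw [integral_one_div_one_add_sq, zero_div, Real.arctan_zero, sub_zero, smul_eq_mul] at h
  rw [eq_div_iff hs.ne', ← intervalIntegral.integral_mul_const, ← mul_right_inj' hs.ne', ← h,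
    ← intervalIntegral.integral_const_mul]
  refine intervalIntegral.integral_congr fun r _ => ?_
  field_simp
  rw [Real.sq_sqrt hε.le]

theorem integral_id_div_add_sq {ε : ℝ} (hε : 0 < ε) (R : ℝ) :
    ∫ r in (0:ℝ)..R, r / (ε + r ^ 2) = Real.log (1 + R ^ 2 / ε) / 2 := by
  have hpos : ∀ r : ℝ, 0 < ε + r ^ 2 := fun r => by positivity
  rw [intervalIntegral.integral_eq_sub_of_hasDerivAt (f := fun r => Real.log (ε + r ^ 2) / 2)]
  · rw [zero_pow two_ne_zero, add_zero, ← sub_div, ← Real.log_div (hpos R).ne' hε.ne', add_div,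
      div_self hε.ne']
  · intro r _
    refine ((((hasDerivAt_pow 2 r).const_add ε).log (hpos r).ne').div_const 2).congr_deriv ?_
    field_simp
    ring
  · exact (continuous_id.div (by fun_prop) fun r => (hpos r).ne').intervalIntegrable _ _

theorem min_one_mul_log_le_log_one_add_mul {c t : ℝ} (hc : 0 < c) (ht : 1 ≤ t) :
    min 1 c * Real.log t ≤ Real.log (1 + c * t) := by
  have ht0 : 0 < t := zero_lt_one.trans_le ht
  rw [← Real.log_rpow ht0]
  refine Real.log_le_log (by positivity) ?_
  calc t ^ min 1 c = (1 + (t - 1)) ^ min 1 c := by rw [add_sub_cancel]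
    _ ≤ 1 + min 1 c * (t - 1) :=
        rpow_one_add_le_one_add_mul_self (by linarith) (by positivity) (min_le_left _ _)
    _ ≤ 1 + c * t := by nlinarith [min_le_right 1 c, min_le_left 1 c]

-- `ρ_d(ε)` in the notation of the informal statement.
noncomputable def narrowRegionRate (d : ℕ) (ε : ℝ) : ℝ :=
  if d = 2 then Real.sqrt ε else if d = 3 then 1 / |Real.log ε| else 1

theorem exists_div_narrowRegionRate_le_intervalIntegral {d : ℕ} (hd : 2 ≤ d) {R : ℝ} (hR : 0 < R) :
    ∃ κ > 0, ∀ ε : ℝ, 0 < ε → ε < 1 / 2 →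
      κ / narrowRegionRate d ε ≤ ∫ r in (0:ℝ)..R, r ^ (d - 2) / (ε + r ^ 2) := by
  obtain rfl | rfl | hd4 : d = 2 ∨ d = 3 ∨ 4 ≤ d := by omega
  · refine ⟨Real.arctan R, Real.arctan_pos.2 hR, fun ε hε hε2 => ?_⟩
    have hs : 0 < √ε := Real.sqrt_pos.2 hε
    rw [narrowRegionRate, if_pos rfl, Nat.sub_self]
    simp_rw [pow_zero]
    rw [integral_one_div_add_sq hε]
    gcongr
    exact le_div_self hR.le hs (Real.sqrt_le_one.2 (by linarith))
  · refine ⟨min 1 (R ^ 2) / 2, by positivity, fun ε hε hε2 => ?_⟩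
    have hlog : |Real.log ε| = Real.log ε⁻¹ := by
      rw [Real.log_inv, abs_of_neg (Real.log_neg hε (by linarith))]
    rw [narrowRegionRate, if_neg (by norm_num), if_pos rfl, show 3 - 2 = 1 from rfl]
    simp_rw [pow_one]
    rw [integral_id_div_add_sq hε, div_div_eq_mul_div, div_one, hlog, div_eq_mul_inv _ ε,
      div_mul_eq_mul_div]
    gcongr
    exact min_one_mul_log_le_log_one_add_mul (by positivity) (one_le_inv₀ hε |>.2 (by linarith))
  · have hint : ∀ ε : ℝ, 0 < ε →
        IntervalIntegrable (fun r : ℝ => r ^ (d - 2) / (ε + r ^ 2)) volume 0 R := fun ε hε =>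
      (continuous_id.pow _ |>.div (by fun_prop) fun r => by positivity).intervalIntegrable _ _
    -- The integral decreases in `ε`, so its value at `ε = 1 / 2` is a lower bound.
    refine ⟨∫ r in (0:ℝ)..R, r ^ (d - 2) / (1 / 2 + r ^ 2),
      intervalIntegral.intervalIntegral_pos_of_pos_on (hint _ one_half_pos)
        (fun r hr => by have := hr.1; positivity) hR, fun ε hε hε2 => ?_⟩
    rw [narrowRegionRate, if_neg (by omega), if_neg (by omega), div_one]
    exact intervalIntegral.integral_mono_on hR.le (hint _ one_half_pos) (hint ε hε) fun r hr =>
      div_le_div_of_nonneg_left (pow_nonneg hr.1 _) (by positivity) (by linarith)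

theorem setIntegral_ball_fun_norm_addHaar {E F : Type*} [NormedAddCommGroup E]
    [NormedSpace ℝ E] [Nontrivial E] [FiniteDimensional ℝ E] [MeasurableSpace E] [BorelSpace E]
    [NormedAddCommGroup F] [NormedSpace ℝ F] (μ : Measure E) [μ.IsAddHaarMeasure] (f : ℝ → F)
    {R : ℝ} (hR : 0 ≤ R) :
    ∫ x in ball 0 R, f ‖x‖ ∂μ = Module.finrank ℝ E • μ.real (ball 0 1) •
      ∫ r in (0:ℝ)..R, r ^ (Module.finrank ℝ E - 1) • f r := by
  have h := integral_fun_norm_addHaar μ ((Iio R).indicator f)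
  have hball :
      (fun x : E => (Iio R).indicator f ‖x‖) = (ball 0 R).indicator (fun x => f ‖x‖) := by
    ext x; simp [indicator]
  have hIoo : (fun r : ℝ => r ^ (Module.finrank ℝ E - 1) • (Iio R).indicator f r)
      = (Iio R).indicator (fun r => r ^ (Module.finrank ℝ E - 1) • f r) := by
    ext r; simp [indicator]
  rw [hball, integral_indicator measurableSet_ball, hIoo, setIntegral_indicator measurableSet_Iio,
    Ioi_inter_Iio, ← integral_Ioc_eq_integral_Ioo, ← intervalIntegral.integral_of_le hR] at h
  exact h

theorem exists_div_narrowRegionRate_le_setIntegral_ball {d : ℕ} (hd : 2 ≤ d) {R : ℝ} (hR : 0 < R) :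
    ∃ κ > 0, ∀ ε : ℝ, 0 < ε → ε < 1 / 2 → κ / narrowRegionRate d ε ≤
      ∫ x in ball (0 : EuclideanSpace ℝ (Fin (d - 1))) R, 1 / (ε + ‖x‖ ^ 2) := by
  have : Nontrivial (EuclideanSpace ℝ (Fin (d - 1))) :=
    Module.nontrivial_of_finrank_pos (R := ℝ) (by rw [finrank_euclideanSpace_fin]; omega)
  obtain ⟨κ, hκ, hrad⟩ := exists_div_narrowRegionRate_le_intervalIntegral hd hR
  set ω := (volume : Measure (EuclideanSpace ℝ (Fin (d - 1)))).real (ball 0 1)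
  have hω : 0 < ω := ENNReal.toReal_pos (measure_ball_pos _ _ one_pos).ne' measure_ball_lt_top.ne
  have hn : (0:ℝ) < (d - 1 : ℕ) := by exact_mod_cast (by omega : 0 < d - 1)
  refine ⟨(d - 1 : ℕ) * ω * κ, by positivity, fun ε hε hε2 => ?_⟩
  rw [setIntegral_ball_fun_norm_addHaar _ (fun r => 1 / (ε + r ^ 2)) hR.le,
    finrank_euclideanSpace_fin, show d - 1 - 1 = d - 2 by omega]
  simp only [nsmul_eq_mul, smul_eq_mul, mul_one_div, mul_div_assoc, ω, mul_assoc]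
  gcongr
  exact hrad ε hε hε2

theorem setIntegral_le_setIntegral_prod {α β : Type*} [MeasurableSpace α] [MeasurableSpace β]
    {μ : Measure α} {ν : Measure β} [SFinite μ] [SFinite ν] {S : Set (α × β)} {B : Set α}
    (hS : MeasurableSet S) (hB : MeasurableSet B) (hSB : S ⊆ B ×ˢ univ) {F : α × β → ℝ}
    (hF : IntegrableOn F S (μ.prod ν)) {g : α → ℝ} (hg : IntegrableOn g B μ)
    (hle : ∀ x ∈ B, g x ≤ ∫ t in Prod.mk x ⁻¹' S, F (x, t) ∂ν) :
    ∫ x in B, g x ∂μ ≤ ∫ p in S, F p ∂μ.prod ν := by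
  have hFS : Integrable (S.indicator F) (μ.prod ν) := hF.integrable_indicator hS
  have hslice : ∀ x, ∫ t, S.indicator F (x, t) ∂ν = ∫ t in Prod.mk x ⁻¹' S, F (x, t) ∂ν :=
    fun x => by rw [← integral_indicator (measurable_prodMk_left hS)]; rfl
  have hempty : ∀ x ∉ B, Prod.mk x ⁻¹' S = ∅ :=
    fun x hx => eq_empty_of_forall_notMem fun t ht => hx (hSB ht).1
  calc ∫ x in B, g x ∂μ ≤ ∫ x in B, ∫ t, S.indicator F (x, t) ∂ν ∂μ :=
        setIntegral_mono_on hg hFS.integral_prod_left.integrableOn hB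
          fun x hx => (hle x hx).trans_eq (hslice x).symm
    _ = ∫ x, ∫ t, S.indicator F (x, t) ∂ν ∂μ :=
        setIntegral_eq_integral_of_forall_compl_eq_zero fun x hx => by
          rw [hslice, hempty x hx, Measure.restrict_empty, integral_zero_measure]
    _ = ∫ p in S, F p ∂μ.prod ν := by rw [← integral_prod _ hFS, integral_indicator hS]

section NarrowRegion

variable {E : Type*} [NormedAddCommGroup E] {R ε : ℝ} {h₁ h : E → ℝ}

def narrowRegion (R ε : ℝ) (h₁ h : E → ℝ) : Set (E × ℝ) :=
  {p | ‖p.1‖ < R ∧ h p.1 < p.2 ∧ p.2 < ε + h₁ p.1}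

theorem measurableSet_narrowRegion [MeasurableSpace E] [OpensMeasurableSpace E]
    (hh₁ : Measurable h₁) (hh : Measurable h) : MeasurableSet (narrowRegion R ε h₁ h) :=
  (measurableSet_lt measurable_fst.norm measurable_const).inter
    ((measurableSet_lt (hh.comp measurable_fst) measurable_snd).inter
      (measurableSet_lt measurable_snd (measurable_const.add (hh₁.comp measurable_fst))))

theorem preimage_mk_narrowRegion {x : E} (hx : ‖x‖ < R) :
    Prod.mk x ⁻¹' narrowRegion R ε h₁ h = Ioo (h x) (ε + h₁ x) := by
  ext t; simp [narrowRegion, hx]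

theorem narrowRegion_subset_ball_prod : narrowRegion R ε h₁ h ⊆ ball 0 R ×ˢ univ :=
  fun _ hp => ⟨mem_ball_zero_iff.2 hp.1, trivial⟩

theorem setIntegral_ball_div_le_setIntegral_narrowRegion [ProperSpace E] [MeasurableSpace E]
    [OpensMeasurableSpace E] {μ : Measure E} [IsFiniteMeasureOnCompacts μ] [SFinite μ] {C : ℝ}
    (hε : 0 < ε) (hh₁ : Measurable h₁) (hh : Measurable h)
    (hgap : ∀ x, ‖x‖ < R → h x < ε + h₁ x)
    (hδ : ∀ x, ‖x‖ < R → ε + h₁ x - h x ≤ C * (ε + ‖x‖ ^ 2)) {F : E × ℝ → ℝ}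
    (hF : IntegrableOn F (narrowRegion R ε h₁ h) (μ.prod volume))
    (hslice : ∀ x, ‖x‖ < R → 1 / (ε + h₁ x - h x) ≤ ∫ t in (h x)..(ε + h₁ x), F (x, t)) :
    (∫ x in ball 0 R, 1 / (ε + ‖x‖ ^ 2) ∂μ) / C ≤
      ∫ p in narrowRegion R ε h₁ h, F p ∂μ.prod volume := by
  have hcont : Continuous fun x : E => 1 / (ε + ‖x‖ ^ 2) / C :=
    (continuous_const.div (by fun_prop) fun x => by positivity).div_const C
  rw [← integral_div]
  refine setIntegral_le_setIntegral_prod (measurableSet_narrowRegion hh₁ hh) measurableSet_ball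
    narrowRegion_subset_ball_prod hF
    ((hcont.continuousOn.integrableOn_compact (isCompact_closedBall 0 R)).mono_set
      ball_subset_closedBall) fun x hx => ?_
  have hxR := mem_ball_zero_iff.1 hx
  rw [preimage_mk_narrowRegion hxR, ← integral_Ioc_eq_integral_Ioo,
    ← intervalIntegral.integral_of_le (hgap x hxR).le, div_div]
  exact (one_div_le_one_div_of_le (sub_pos.2 (hgap x hxR))
    ((hδ x hxR).trans_eq (mul_comm _ _))).trans (hslice x hxR)

end NarrowRegion

/-- lower bound for the vertical energy of a function equal to 0 on the bottom
and 1 on the top of the narrow region, slice-wise and globally. -/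
theorem stmt17 (d : ℕ) (hd : 2 ≤ d) (C R : ℝ) (hC : 0 < C) (hR : 0 < R) :
    ∃ C' > (0:ℝ), ∀ ε : ℝ, 0 < ε → ε < 1/2 →
      ∀ h₁ h : EuclideanSpace ℝ (Fin (d - 1)) → ℝ, Continuous h₁ → Continuous h →
        (∀ x' : EuclideanSpace ℝ (Fin (d - 1)), ‖x'‖ < R →
          (1/C) * (ε + ‖x'‖ ^ 2) ≤ ε + h₁ x' - h x' ∧
            ε + h₁ x' - h x' ≤ C * (ε + ‖x'‖ ^ 2)) →
        ∀ v : EuclideanSpace ℝ (Fin (d - 1)) × ℝ → ℝ, ContDiff ℝ 1 v →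
          (∀ x' : EuclideanSpace ℝ (Fin (d - 1)), ‖x'‖ < R →
            v (x', h x') = 0 ∧ v (x', ε + h₁ x') = 1) →
          IntegrableOn (fun p => (deriv (fun s => v (p.1, s)) p.2) ^ 2)
            {p : EuclideanSpace ℝ (Fin (d - 1)) × ℝ |
              ‖p.1‖ < R ∧ h p.1 < p.2 ∧ p.2 < ε + h₁ p.1} volume →
          (∀ x' : EuclideanSpace ℝ (Fin (d - 1)), ‖x'‖ < R →
            1 / (ε + h₁ x' - h x')
              ≤ ∫ t in (h x')..(ε + h₁ x'), (deriv (fun s => v (x', s)) t) ^ 2) ∧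
          (1/C') * (1 / (if d = 2 then Real.sqrt ε else if d = 3 then 1 / |Real.log ε| else 1))
            ≤ ∫ p in {p : EuclideanSpace ℝ (Fin (d - 1)) × ℝ |
                ‖p.1‖ < R ∧ h p.1 < p.2 ∧ p.2 < ε + h₁ p.1},
                (deriv (fun s => v (p.1, s)) p.2) ^ 2 := by
  obtain ⟨κ, hκ, hball⟩ := exists_div_narrowRegionRate_le_setIntegral_ball hd hR
  refine ⟨C / κ, by positivity, fun ε hε hε2 h₁ h hh₁ hh hδ v hv hbc hint => ?_⟩
  have hgap : ∀ x' : EuclideanSpace ℝ (Fin (d - 1)), ‖x'‖ < R → h x' < ε + h₁ x' := by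
    intro x' hx'
    have : 0 < 1 / C * (ε + ‖x'‖ ^ 2) := by positivity
    linarith [(hδ x' hx').1]
  have hslice : ∀ x' : EuclideanSpace ℝ (Fin (d - 1)), ‖x'‖ < R → 1 / (ε + h₁ x' - h x')
      ≤ ∫ t in (h x')..(ε + h₁ x'), (deriv (fun s => v (x', s)) t) ^ 2 := fun x' hx' => by
    simpa [(hbc x' hx').1, (hbc x' hx').2] using
      sq_sub_div_le_integral_deriv_sq (g := fun s => v (x', s))
        (hv.comp (contDiff_const.prodMk contDiff_id)) (hgap x' hx')
  refine ⟨hslice, ?_⟩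
  rw [Measure.volume_eq_prod] at hint ⊢
  calc 1 / (C / κ) * (1 / narrowRegionRate d ε) = κ / narrowRegionRate d ε / C := by field_simp
    _ ≤ (∫ x' in ball (0 : EuclideanSpace ℝ (Fin (d - 1))) R, 1 / (ε + ‖x'‖ ^ 2)) / C := by
        gcongr; exact hball ε hε hε2
    _ ≤ _ := setIntegral_ball_div_le_setIntegral_narrowRegion hε hh₁.measurable hh.measurable
        hgap (fun x' hx' => (hδ x' hx').2) hint hslice
end
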